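/- arXiv:1602.06534 — 2 statements merged into one kernel-verified Lean document; each statement's English description precedes it below -/
import Mathlib

section
/- Let A be a finite abelian category with projective generator P of A^op, and let T be a k-linear left exact comonad on A. Then the cofree T-comodule T(P) is a projective generator of (A^T)^op, i.e., an injective cogenerator of A^T. -/
open CategoryTheory CategoryTheory.Limits

universe v u

noncomputable section

def IsFiniteAbelian (k : Type) [Field k] (A : Type u) [Category.{v} A]
    [Preadditive A] : Prop :=
  ∃ (R : Type) (_ : Ring R) (_ : Algebra k R), FiniteDimensional k R ∧
    ∃ e : A ≌ FGModuleCat.{0} R, e.functor.Additive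

theorem CategoryTheory.IsCoseparator.of_adjunction {C D : Type*} [Category C] [Category D]
    {L : C ⥤ D} {R : D ⥤ C} [L.Faithful] {G : D} (hG : IsCoseparator G) (adj : L ⊣ R) :
    IsCoseparator (R.obj G) := by
  rw [isCoseparator_def]
  intro X Y f g hfg
  refine L.map_injective (hG.def _ _ fun h => ?_)
  simpa only [Adjunction.homEquiv_naturality_left_symm, Equiv.symm_apply_apply] using
    congrArg (adj.homEquiv X G).symm (hfg (adj.homEquiv Y G h))

/-- The forgetful functor creates pullbacks, since `T` preserves them. -/
instance CategoryTheory.Comonad.forget_preservesMonomorphisms {C : Type*} [Category C]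
    [HasPullbacks C] (T : Comonad C) [PreservesLimitsOfShape WalkingCospan T.toFunctor] :
    T.forget.PreservesMonomorphisms :=
  preservesMonomorphisms_of_preservesLimitsOfShape _

theorem cofree_comodule_injective_cogenerator_general
    (A : Type u) [Category.{v} A] [Abelian A]
    (T : Comonad A)
    [PreservesFiniteLimits T.toFunctor]
    (P : A) (hinj : Injective P) (hcog : IsCoseparator P) :
    Injective ((Comonad.cofree T).obj P) ∧ IsCoseparator ((Comonad.cofree T).obj P) :=
  ⟨Injective.injective_of_adjoint T.adj P, hcog.of_adjunction T.adj⟩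

/-- Let `A` be a finite abelian category and `P` a projective
generator of `Aᵒᵖ` (i.e. an injective cogenerator of `A`), and let `T` be a
`k`-linear left exact comonad on `A`.  Then the cofree `T`-comodule `T(P)` is a
projective generator of `(A^T)ᵒᵖ`, i.e. an injective cogenerator of `A^T`. -/
theorem cofree_comodule_injective_cogenerator
    (k : Type) [Field k] [IsAlgClosed k]
    (A : Type u) [Category.{v} A] [Abelian A] [Linear k A]
    (hA : IsFiniteAbelian k A)
    (T : Comonad A)
    [T.toFunctor.Additive] [T.toFunctor.Linear k]
    [PreservesFiniteLimits T.toFunctor]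
    (P : A) (hinj : Injective P) (hcog : IsCoseparator P) :
    Injective ((Comonad.cofree T).obj P) ∧ IsCoseparator ((Comonad.cofree T).obj P) :=
  cofree_comodule_injective_cogenerator_general A T P hinj hcog
end
end

section
/- Let G : A → B be a functor with left adjoint F : B → A, and let P : A^op × B → V be a functor. If the coend ∫^{X∈A} P(X, G(X)) exists, then the coend ∫^{X∈B} P(F(X), X) exists and is canonically isomorphic to it, and conversely. -/
/-!
Precomposing with the unit, `P(F Y, Y) → P(F Y, G F Y)`, and with the counit,
`P(X, G X) → P(F G X, G X)`, turns dinatural families out of `P(-, G -)` into dinatural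
families out of `P(F -, -)` and back. Dinaturality together with the triangle identities makes
these mutually inverse, and they commute with postcomposition, so universal families, i.e.
coends, correspond to each other; any two coends of the same functor are isomorphic.
-/

open CategoryTheory CategoryTheory.Limits Opposite

universe v₁ v₂ v₃ u₁ u₂ u₃

noncomputable section

variable {C : Type u₁} [Category.{v₁} C] {V : Type u₃} [Category.{v₃} V]

/-- A family `ι X : Q(X, X) ⟶ E` is dinatural if for every `f : X ⟶ Y` the two
evident morphisms `Q(Y, X) ⟶ E` agree. -/
def IsDinatural (Q : Cᵒᵖ × C ⥤ V) {E : V}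
    (ι : ∀ X : C, Q.obj (op X, X) ⟶ E) : Prop :=
  ∀ {X Y : C} (f : X ⟶ Y),
    Q.map (((f.op, 𝟙 X) : ((op Y, X) : Cᵒᵖ × C) ⟶ (op X, X))) ≫ ι X =
      Q.map (((𝟙 (op Y), f) : ((op Y, X) : Cᵒᵖ × C) ⟶ (op Y, Y))) ≫ ι Y

/-- `(E, ι)` is a coend of `Q : Cᵒᵖ × C ⥤ V`: a universal dinatural family. -/
structure IsCoend (Q : Cᵒᵖ × C ⥤ V) (E : V)
    (ι : ∀ X : C, Q.obj (op X, X) ⟶ E) : Prop where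
  dinatural : IsDinatural Q ι
  uniqueFactor : ∀ {E' : V} (ι' : ∀ X : C, Q.obj (op X, X) ⟶ E'),
    IsDinatural Q ι' → ∃! φ : E ⟶ E', ∀ X : C, ι X ≫ φ = ι' X

open CategoryTheory.Prod

theorem CategoryTheory.Bifunctor.diagonal_comm {C' D' : Type*} [Category C'] [Category D']
    (P : C' × D' ⥤ V) {X Y : C'} {X' Y' : D'} (f : X ⟶ Y) (g : X' ⟶ Y') :
    P.map (f ×ₘ 𝟙 X') ≫ P.map (𝟙 Y ×ₘ g) = P.map (𝟙 X ×ₘ g) ≫ P.map (f ×ₘ 𝟙 Y') :=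
  (Bifunctor.diagonal' P _ _ f _ _ g).trans (Bifunctor.diagonal P _ _ f _ _ g).symm

namespace IsCoend

variable {Q : Cᵒᵖ × C ⥤ V}

theorem hom_ext {E E' : V} {ι : ∀ X : C, Q.obj (op X, X) ⟶ E} (h : IsCoend Q E ι)
    {φ ψ : E ⟶ E'} (hφψ : ∀ X, ι X ≫ φ = ι X ≫ ψ) : φ = ψ := by
  obtain ⟨χ, -, hχ⟩ := h.uniqueFactor (fun X => ι X ≫ ψ) fun f => by
    simp only [← Category.assoc, h.dinatural f]
  exact (hχ φ hφψ).trans (hχ ψ fun _ => rfl).symm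

theorem nonempty_iso {E E' : V} {ι : ∀ X : C, Q.obj (op X, X) ⟶ E}
    {ι' : ∀ X : C, Q.obj (op X, X) ⟶ E'} (h : IsCoend Q E ι) (h' : IsCoend Q E' ι') :
    Nonempty (E ≅ E') := by
  obtain ⟨φ, hφ, -⟩ := h.uniqueFactor ι' h'.dinatural
  obtain ⟨ψ, hψ, -⟩ := h'.uniqueFactor ι h.dinatural
  exact ⟨{ hom := φ, inv := ψ
           hom_inv_id := h.hom_ext fun X => by simp [reassoc_of% hφ, hψ]
           inv_hom_id := h'.hom_ext fun X => by simp [reassoc_of% hψ, hφ] }⟩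

end IsCoend

structure DinaturalEquiv {D : Type u₂} [Category.{v₂} D]
    (Q : Cᵒᵖ × C ⥤ V) (Q' : Dᵒᵖ × D ⥤ V) where
  toFun {E : V} : (∀ X : C, Q.obj (op X, X) ⟶ E) → ∀ Y : D, Q'.obj (op Y, Y) ⟶ E
  invFun {E : V} : (∀ Y : D, Q'.obj (op Y, Y) ⟶ E) → ∀ X : C, Q.obj (op X, X) ⟶ E
  isDinatural_toFun {E : V} (ι : ∀ X : C, Q.obj (op X, X) ⟶ E) :
    IsDinatural Q ι → IsDinatural Q' (toFun ι)
  isDinatural_invFun {E : V} (κ : ∀ Y : D, Q'.obj (op Y, Y) ⟶ E) :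
    IsDinatural Q' κ → IsDinatural Q (invFun κ)
  invFun_toFun {E : V} (ι : ∀ X : C, Q.obj (op X, X) ⟶ E) :
    IsDinatural Q ι → invFun (toFun ι) = ι
  toFun_invFun {E : V} (κ : ∀ Y : D, Q'.obj (op Y, Y) ⟶ E) :
    IsDinatural Q' κ → toFun (invFun κ) = κ
  toFun_comp {E E' : V} (ι : ∀ X : C, Q.obj (op X, X) ⟶ E) (φ : E ⟶ E') :
    toFun (fun X => ι X ≫ φ) = fun Y => toFun ι Y ≫ φ
  invFun_comp {E E' : V} (κ : ∀ Y : D, Q'.obj (op Y, Y) ⟶ E) (φ : E ⟶ E') :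
    invFun (fun Y => κ Y ≫ φ) = fun X => invFun κ X ≫ φ

namespace DinaturalEquiv

variable {D : Type u₂} [Category.{v₂} D] {Q : Cᵒᵖ × C ⥤ V} {Q' : Dᵒᵖ × D ⥤ V}

def symm (e : DinaturalEquiv Q Q') : DinaturalEquiv Q' Q where
  toFun := e.invFun
  invFun := e.toFun
  isDinatural_toFun := e.isDinatural_invFun
  isDinatural_invFun := e.isDinatural_toFun
  invFun_toFun := e.toFun_invFun
  toFun_invFun := e.invFun_toFun
  toFun_comp := e.invFun_comp
  invFun_comp := e.toFun_comp

theorem isCoend (e : DinaturalEquiv Q Q') {E : V} {ι : ∀ X : C, Q.obj (op X, X) ⟶ E}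
    (h : IsCoend Q E ι) : IsCoend Q' E (e.toFun ι) where
  dinatural := e.isDinatural_toFun ι h.dinatural
  uniqueFactor κ hκ := by
    obtain ⟨φ, hφ, huniq⟩ := h.uniqueFactor (e.invFun κ) (e.isDinatural_invFun κ hκ)
    refine ⟨φ, fun Y => ?_, fun ψ hψ => huniq ψ fun X => ?_⟩
    · rw [← congrFun (e.toFun_comp ι φ) Y, funext hφ, e.toFun_invFun κ hκ]
    · rw [← congrFun (e.invFun_toFun ι h.dinatural) X, ← congrFun (e.invFun_comp _ ψ) X,
        funext hψ]

end DinaturalEquiv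

section Adjunction

variable {A : Type u₁} [Category.{v₁} A] {B : Type u₂} [Category.{v₂} B]

theorem isDinatural_id_prod_comp_iff (G : A ⥤ B) (P : Aᵒᵖ × B ⥤ V) {E : V}
    (ι : ∀ X : A, ((𝟭 Aᵒᵖ).prod G ⋙ P).obj (op X, X) ⟶ E) :
    IsDinatural ((𝟭 Aᵒᵖ).prod G ⋙ P) ι ↔ ∀ {X Y : A} (f : X ⟶ Y),
      P.map (f.op ×ₘ 𝟙 (G.obj X)) ≫ ι X = P.map (𝟙 (op Y) ×ₘ G.map f) ≫ ι Y := by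
  simp [IsDinatural]

theorem isDinatural_op_prod_id_comp_iff (F : B ⥤ A) (P : Aᵒᵖ × B ⥤ V) {E : V}
    (κ : ∀ Y : B, (F.op.prod (𝟭 B) ⋙ P).obj (op Y, Y) ⟶ E) :
    IsDinatural (F.op.prod (𝟭 B) ⋙ P) κ ↔ ∀ {X Y : B} (f : X ⟶ Y),
      P.map ((F.map f).op ×ₘ 𝟙 X) ≫ κ X = P.map (𝟙 (op (F.obj Y)) ×ₘ f) ≫ κ Y := by
  simp [IsDinatural]

variable {G : A ⥤ B} {F : B ⥤ A} (adj : F ⊣ G) (P : Aᵒᵖ × B ⥤ V)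

def precompUnit {E : V} (ι : ∀ X : A, ((𝟭 Aᵒᵖ).prod G ⋙ P).obj (op X, X) ⟶ E) :
    ∀ Y : B, (F.op.prod (𝟭 B) ⋙ P).obj (op Y, Y) ⟶ E :=
  fun Y => P.map (𝟙 (op (F.obj Y)) ×ₘ adj.unit.app Y) ≫ ι (F.obj Y)

def precompCounit {E : V} (κ : ∀ Y : B, (F.op.prod (𝟭 B) ⋙ P).obj (op Y, Y) ⟶ E) :
    ∀ X : A, ((𝟭 Aᵒᵖ).prod G ⋙ P).obj (op X, X) ⟶ E :=
  fun X => P.map ((adj.counit.app X).op ×ₘ 𝟙 (G.obj X)) ≫ κ (G.obj X)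

theorem precompCounit_precompUnit {E : V}
    {ι : ∀ X : A, ((𝟭 Aᵒᵖ).prod G ⋙ P).obj (op X, X) ⟶ E}
    (h : IsDinatural ((𝟭 Aᵒᵖ).prod G ⋙ P) ι) :
    precompCounit adj P (precompUnit adj P ι) = ι := by
  funext X
  have hd := (isDinatural_id_prod_comp_iff G P ι).1 h (adj.counit.app X)
  simp only [Functor.comp_obj, Functor.id_obj] at hd
  simp only [precompCounit, precompUnit]
  rw [reassoc_of% (Bifunctor.diagonal_comm P (adj.counit.app X).op (adj.unit.app (G.obj X))),
    hd]
  simp [← P.map_comp_assoc]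

theorem precompUnit_precompCounit {E : V}
    {κ : ∀ Y : B, (F.op.prod (𝟭 B) ⋙ P).obj (op Y, Y) ⟶ E}
    (h : IsDinatural (F.op.prod (𝟭 B) ⋙ P) κ) :
    precompUnit adj P (precompCounit adj P κ) = κ := by
  funext Y
  have hd := (isDinatural_op_prod_id_comp_iff F P κ).1 h (adj.unit.app Y)
  simp only [Functor.comp_obj, Functor.id_obj] at hd
  simp only [precompCounit, precompUnit]
  rw [← reassoc_of% (Bifunctor.diagonal_comm P (adj.counit.app (F.obj Y)).op (adj.unit.app Y)),
    ← hd, ← P.map_comp_assoc, prod_comp, ← op_comp, adj.left_triangle_components]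
  simp

theorem isDinatural_precompUnit {E : V}
    {ι : ∀ X : A, ((𝟭 Aᵒᵖ).prod G ⋙ P).obj (op X, X) ⟶ E}
    (h : IsDinatural ((𝟭 Aᵒᵖ).prod G ⋙ P) ι) :
    IsDinatural (F.op.prod (𝟭 B) ⋙ P) (precompUnit adj P ι) := by
  refine (isDinatural_op_prod_id_comp_iff F P _).2 ?_
  intro X Y f
  have hd := (isDinatural_id_prod_comp_iff G P ι).1 h (F.map f)
  simp only [precompUnit]
  rw [reassoc_of% (Bifunctor.diagonal_comm P (F.map f).op (adj.unit.app X)), hd,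
    ← P.map_comp_assoc, ← P.map_comp_assoc]
  simp

theorem isDinatural_precompCounit {E : V}
    {κ : ∀ Y : B, (F.op.prod (𝟭 B) ⋙ P).obj (op Y, Y) ⟶ E}
    (h : IsDinatural (F.op.prod (𝟭 B) ⋙ P) κ) :
    IsDinatural ((𝟭 Aᵒᵖ).prod G ⋙ P) (precompCounit adj P κ) := by
  refine (isDinatural_id_prod_comp_iff G P _).2 ?_
  intro X Y f
  have hd := (isDinatural_op_prod_id_comp_iff F P κ).1 h (G.map f)
  simp only [precompCounit]
  rw [← reassoc_of% (Bifunctor.diagonal_comm P (adj.counit.app Y).op (G.map f)), ← hd,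
    ← P.map_comp_assoc, ← P.map_comp_assoc]
  simp only [prod_comp, ← op_comp, adj.counit_naturality, Category.comp_id]

theorem precompUnit_comp {E E' : V}
    (ι : ∀ X : A, ((𝟭 Aᵒᵖ).prod G ⋙ P).obj (op X, X) ⟶ E) (φ : E ⟶ E') :
    precompUnit adj P (fun X => ι X ≫ φ) = fun Y => precompUnit adj P ι Y ≫ φ := by
  funext Y; simp [precompUnit]

theorem precompCounit_comp {E E' : V}
    (κ : ∀ Y : B, (F.op.prod (𝟭 B) ⋙ P).obj (op Y, Y) ⟶ E) (φ : E ⟶ E') :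
    precompCounit adj P (fun Y => κ Y ≫ φ) = fun X => precompCounit adj P κ X ≫ φ := by
  funext X; simp [precompCounit]

def dinaturalEquivOfAdjunction :
    DinaturalEquiv ((𝟭 Aᵒᵖ).prod G ⋙ P) (F.op.prod (𝟭 B) ⋙ P) where
  toFun := precompUnit adj P
  invFun := precompCounit adj P
  isDinatural_toFun _ := isDinatural_precompUnit adj P
  isDinatural_invFun _ := isDinatural_precompCounit adj P
  invFun_toFun _ := precompCounit_precompUnit adj P
  toFun_invFun _ := precompUnit_precompCounit adj P
  toFun_comp := precompUnit_comp adj P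
  invFun_comp := precompCounit_comp adj P

end Adjunction

/-- Let `G : A ⥤ B` have a left adjoint `F : B ⥤ A` and let
`P : Aᵒᵖ × B ⥤ V`.  Then the coend `∫^{X ∈ A} P(X, G X)` exists iff the coend
`∫^{X ∈ B} P(F X, X)` exists, and when they do they are canonically isomorphic. -/
theorem coend_along_adjunction
    {A : Type u₁} [Category.{v₁} A] {B : Type u₂} [Category.{v₂} B]
    {V : Type u₃} [Category.{v₃} V]
    (G : A ⥤ B) (F : B ⥤ A) (adj : F ⊣ G)
    (P : Aᵒᵖ × B ⥤ V) :
    ((∃ (E : V) (ι : ∀ X : A, ((Functor.id Aᵒᵖ).prod G ⋙ P).obj (op X, X) ⟶ E),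
        IsCoend ((Functor.id Aᵒᵖ).prod G ⋙ P) E ι) ↔
      (∃ (E : V) (ι : ∀ X : B, (F.op.prod (Functor.id B) ⋙ P).obj (op X, X) ⟶ E),
        IsCoend (F.op.prod (Functor.id B) ⋙ P) E ι)) ∧
    (∀ (E E' : V) (ι : ∀ X : A, ((Functor.id Aᵒᵖ).prod G ⋙ P).obj (op X, X) ⟶ E)
        (ι' : ∀ X : B, (F.op.prod (Functor.id B) ⋙ P).obj (op X, X) ⟶ E'),
      IsCoend ((Functor.id Aᵒᵖ).prod G ⋙ P) E ι →
      IsCoend (F.op.prod (Functor.id B) ⋙ P) E' ι' →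
      Nonempty (E ≅ E')) := by
  have e := dinaturalEquivOfAdjunction adj P
  refine ⟨⟨fun ⟨E, _, h⟩ => ⟨E, _, e.isCoend h⟩,
    fun ⟨E, _, h⟩ => ⟨E, _, e.symm.isCoend h⟩⟩, ?_⟩
  exact fun _ _ _ _ h h' => (e.isCoend h).nonempty_iso h'
end
end
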